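/- Let m and k be positive integers with k odd and gcd(m,k) = 1, and let f(x) = x^{(3^k+1)/2} on F_{3^m}. Let C_f ⊆ F_3^{3^m+1} be the subfield code with codewords ((Tr(a f(x)+bx)+c)_{x∈F_{3^m}}, Tr(a)) for a,b ∈ F_{3^m}, c ∈ F_3, and let A_i^⊥ be the number of vectors of Hamming weight i in the dual code C_f^⊥. Then A_1^⊥ = A_2^⊥ = A_3^⊥ = 0. -/

import Mathlib

noncomputable section
open scoped Classical

instance : Fact (Nat.Prime 3) := ⟨Nat.prime_three⟩

noncomputable instance (p n : ℕ) [Fact p.Prime] : Fintype (GaloisField p n) :=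
  Fintype.ofFinite _

/-- The absolute trace map from `F_{3^m}` to `F_3`. -/
def tr (m : ℕ) (x : GaloisField 3 m) : ZMod 3 :=
  Algebra.trace (ZMod 3) (GaloisField 3 m) x

/-- The Coulter–Matthews function `f(x) = x^{(3^k+1)/2}` on `F_{3^m}`. -/
def cmf (m k : ℕ) (x : GaloisField 3 m) : GaloisField 3 m :=
  x ^ ((3 ^ k + 1) / 2)

/-- The codeword `((Tr(a f(x)+bx)+c)_{x∈F_{3^m}}, Tr(a))` of length `3^m + 1`. -/
def fullWord (m k : ℕ) (a b : GaloisField 3 m) (c : ZMod 3) :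
    Option (GaloisField 3 m) → ZMod 3 :=
  fun i => i.elim (tr m a) fun x => tr m (a * cmf m k x + b * x) + c

/-- The dual code `C_f^⊥`: all vectors orthogonal to every codeword of `C_f`. -/
def fullDual (m k : ℕ) : Set (Option (GaloisField 3 m) → ZMod 3) :=
  {v | ∀ (a b : GaloisField 3 m) (c : ZMod 3), ∑ i, v i * fullWord m k a b c i = 0}

/-- `A_i^⊥`: the number of vectors of Hamming weight `i` in `C_f^⊥`. -/
def dualA (m k i : ℕ) : ℕ :=
  Nat.card {v : Option (GaloisField 3 m) → ZMod 3 //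
    v ∈ fullDual m k ∧ hammingNorm v = i}

/-!
By nondegeneracy of the trace form, `v` lies in the dual code iff `∑ v_x = 0`, `∑ v_x x = 0`
and `v_∞ + ∑ v_x f(x) = 0`. The first two checks rule out weights one and two on the finite
coordinates, and a word of weight three there has equal nonzero coefficients on three distinct
points with `x + y + z = 0` and `f(x) + f(y) + f(z) = 0`. Put `e = (3^k+1)/2`, so that
`(w^e)^2 = w^{3^k} w`; squaring `x^e + y^e = -(x+y)^e` then forces `x^{3^k} y = y^{3^k} x`.
Hence `x/y` is fixed by the `3^k`-th power map, so lies in `F_3` as `gcd(m,k) = 1`, and since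
`e` is even (`k` odd) each of `x/y ∈ {0, 1, -1}` contradicts distinctness.
-/

lemma pow_pow_gcd_eq_self {M : Type*} [Monoid M] {u : M} {p m k : ℕ}
    (hm : u ^ p ^ m = u) (hk : u ^ p ^ k = u) : u ^ p ^ m.gcd k = u := by
  have hper : ∀ {n}, u ^ p ^ n = u → Function.IsPeriodicPt (· ^ p) n u := fun h => by
    rwa [Function.IsPeriodicPt, Function.IsFixedPt, pow_iterate]
  simpa only [Function.IsPeriodicPt, Function.IsFixedPt, pow_iterate] using
    (hper hm).gcd (hper hk)

lemma two_mul_three_pow_add_one_div_two (k : ℕ) : 2 * ((3 ^ k + 1) / 2) = 3 ^ k + 1 := by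
  have : 3 ^ k % 2 = 1 := Nat.odd_iff.mp (Odd.pow (by decide))
  omega

lemma even_three_pow_add_one_div_two {k : ℕ} (hk : Odd k) : Even ((3 ^ k + 1) / 2) := by
  have : 3 + 1 ∣ 3 ^ k + 1 ^ k := hk.nat_add_dvd_pow_add_pow 3 1
  rw [one_pow] at this
  exact Nat.even_iff.mpr (by omega)

lemma mul_eq_mul_of_add_sq_eq {R : Type*} [CommRing R] [IsReduced R] {a b x y P Q : R}
    (ha : a ^ 2 = P * x) (hb : b ^ 2 = Q * y) (hab : (a + b) ^ 2 = (P + Q) * (x + y)) :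
    P * y = Q * x := by
  have hcross : 2 * a * b = P * y + Q * x := by linear_combination hab - ha - hb
  have hsq : (P * y - Q * x) ^ 2 = 0 := by
    linear_combination (-(P * y + Q * x + 2 * a * b)) * hcross + 4 * b ^ 2 * ha + 4 * P * x * hb
  exact sub_eq_zero.mp (IsNilpotent.eq_zero ⟨2, hsq⟩)

section CharThree

variable {K : Type*} [Field K] [CharP K 3]

lemma eq_zero_of_pow_add_pow_eq_zero {w : K} {e : ℕ} (he : e ≠ 0) (h : w ^ e + w ^ e = 0) :
    w = 0 := by
  have h3 : (3 : K) = 0 := by exact_mod_cast CharP.cast_eq_zero K 3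
  exact (pow_eq_zero_iff he).mp (by linear_combination w ^ e * h3 - h)

theorem eq_of_add_add_eq_zero_of_pow_add_add_eq_zero [Fintype K] {m k : ℕ}
    (hcard : Fintype.card K = 3 ^ m) (hk : Odd k) (hmk : m.gcd k = 1) {x y z : K}
    (hs : x + y + z = 0)
    (hf : x ^ ((3 ^ k + 1) / 2) + y ^ ((3 ^ k + 1) / 2) + z ^ ((3 ^ k + 1) / 2) = 0) :
    x = y := by
  set e := (3 ^ k + 1) / 2
  have he : 2 * e = 3 ^ k + 1 := two_mul_three_pow_add_one_div_two k
  have hneg : ∀ w : K, (-w) ^ e = w ^ e := (even_three_pow_add_one_div_two hk).neg_pow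
  clear_value e
  have he0 : e ≠ 0 := by rintro rfl; simp at he
  rw [show z = -(x + y) by linear_combination hs, hneg] at hf
  rcases eq_or_ne x 0 with rfl | hx
  · exact (eq_zero_of_pow_add_pow_eq_zero he0 (by simpa [zero_pow he0] using hf)).symm
  rcases eq_or_ne y 0 with rfl | hy
  · exact absurd (eq_zero_of_pow_add_pow_eq_zero he0 (by simpa [zero_pow he0] using hf)) hx
  have hsq : ∀ w : K, (w ^ e) ^ 2 = w ^ 3 ^ k * w := fun w => by
    rw [← pow_mul, mul_comm, he, pow_succ]
  have hfix : x ^ 3 ^ k * y = y ^ 3 ^ k * x := by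
    refine mul_eq_mul_of_add_sq_eq (hsq x) (hsq y) ?_
    rw [show x ^ e + y ^ e = -(x + y) ^ e by linear_combination hf, neg_sq, hsq,
      add_pow_char_pow]
  have hratio : (x / y) ^ 3 ^ k = x / y := by
    rw [div_pow, div_eq_div_iff (pow_ne_zero _ hy) hy]
    linear_combination hfix
  have hratio3 : (x / y) ^ 3 = x / y := by
    have hcard' : (x / y) ^ 3 ^ m = x / y := by rw [← hcard]; exact FiniteField.pow_card _
    simpa only [hmk, pow_one] using pow_pow_gcd_eq_self hcard' hratio
  rw [div_pow, div_eq_div_iff (pow_ne_zero _ hy) hy] at hratio3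
  have hprod : x * y * (x - y) * (x + y) = 0 := by linear_combination hratio3
  simp only [mul_eq_zero, hx, hy, sub_eq_zero, false_or] at hprod
  rcases hprod with hxy | hxy
  · exact hxy
  · rw [eq_neg_of_add_eq_zero_left hxy, hneg, neg_add_cancel, zero_pow he0, add_zero] at hf
    exact absurd (eq_zero_of_pow_add_pow_eq_zero he0 hf) hy

end CharThree

lemma hammingNorm_option {α β : Type*} [Fintype α] [Zero β] [DecidableEq β] (v : Option α → β) :
    hammingNorm v = hammingNorm (fun x => v (some x)) + if v none = 0 then 0 else 1 := by
  simp only [hammingNorm, Finset.card_filter, Fintype.sum_option]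
  by_cases h : v none = 0 <;> simp [h, add_comm]

lemma eq_zero_of_hammingNorm_le_two {k V : Type*} [Field k] [DecidableEq k] [AddCommGroup V]
    [Module k V] [Fintype V] {w : V → k} (h0 : ∑ x, w x = 0) (h1 : ∑ x, w x • x = 0)
    (hn : hammingNorm w ≤ 2) : w = 0 := by
  rw [← Finset.sum_filter_ne_zero] at h0
  rw [← Finset.sum_filter_of_ne fun x _ h => left_ne_zero_of_smul h] at h1
  obtain h | h | h : hammingNorm w = 0 ∨ hammingNorm w = 1 ∨ hammingNorm w = 2 := by omega
  · exact hammingNorm_eq_zero.mp h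
  · obtain ⟨x, hT⟩ := Finset.card_eq_one.mp h
    have hx : w x ≠ 0 := by simpa using hT.ge (Finset.mem_singleton_self x)
    rw [hT, Finset.sum_singleton] at h0
    exact absurd h0 hx
  · obtain ⟨x, y, hxy, hT⟩ := Finset.card_eq_two.mp h
    have hx : w x ≠ 0 := by simpa using hT.ge (Finset.mem_insert_self x {y})
    rw [hT, Finset.sum_pair hxy] at h0 h1
    rw [eq_neg_of_add_eq_zero_right h0, neg_smul, ← sub_eq_add_neg, ← smul_sub,
      smul_eq_zero, sub_eq_zero] at h1
    exact absurd (h1.resolve_left hx) hxy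

lemma ZMod.eq_of_ne_zero_of_add_add_eq_zero {a b c : ZMod 3} (ha : a ≠ 0) (hb : b ≠ 0)
    (hc : c ≠ 0) (h : a + b + c = 0) : b = a ∧ c = a := by
  revert a b c; decide

lemma exists_add_add_eq_zero_of_hammingNorm_eq_three {α : Type*} [Fintype α] {w : α → ZMod 3}
    (h0 : ∑ x, w x = 0) (hn : hammingNorm w = 3) :
    ∃ x y z, x ≠ y ∧ ∀ {W : Type*} [AddCommGroup W] [Module (ZMod 3) W] (g : α → W),
      ∑ x, w x • g x = 0 → g x + g y + g z = 0 := by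
  obtain ⟨x, y, z, hxy, hxz, hyz, hT⟩ := Finset.card_eq_three.mp hn
  have hsupp : ∀ u ∈ ({x, y, z} : Finset α), w u ≠ 0 := fun u hu => by simpa using hT.ge hu
  rw [← Finset.sum_filter_ne_zero, hT, Finset.sum_insert (by simp [hxy, hxz]),
    Finset.sum_pair hyz] at h0
  obtain ⟨hwy, hwz⟩ := ZMod.eq_of_ne_zero_of_add_add_eq_zero (hsupp x (by simp))
    (hsupp y (by simp)) (hsupp z (by simp)) (by rw [← add_assoc] at h0; exact h0)
  refine ⟨x, y, z, hxy, fun g hg => ?_⟩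
  rw [← Finset.sum_filter_of_ne fun u _ h => left_ne_zero_of_smul h, hT,
    Finset.sum_insert (by simp [hxy, hxz]), Finset.sum_pair hyz, hwy, hwz, ← smul_add,
    ← smul_add, smul_eq_zero, ← add_assoc] at hg
  exact hg.resolve_left (hsupp x (by simp))

section SubfieldCode

variable {m : ℕ}

lemma tr_add (a b : GaloisField 3 m) : tr m (a + b) = tr m a + tr m b :=
  map_add _ a b

lemma tr_mul_algebraMap (a : GaloisField 3 m) (c : ZMod 3) :
    tr m (a * algebraMap (ZMod 3) (GaloisField 3 m) c) = c * tr m a := by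
  rw [tr, tr, mul_comm, ← Algebra.smul_def, map_smul, smul_eq_mul]

lemma tr_mul_sum_smul {α : Type*} [Fintype α] (b : GaloisField 3 m) (w : α → ZMod 3)
    (g : α → GaloisField 3 m) : tr m (b * ∑ x, w x • g x) = ∑ x, w x * tr m (b * g x) := by
  simp only [tr, Finset.mul_sum, mul_smul_comm, map_sum, map_smul, smul_eq_mul]

lemma eq_zero_of_forall_tr_mul_eq_zero {W : GaloisField 3 m} (h : ∀ a, tr m (a * W) = 0) :
    W = 0 :=
  (traceForm_nondegenerate (ZMod 3) (GaloisField 3 m)).1 W fun a => by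
    rw [Algebra.traceForm_apply, mul_comm]; exact h a

lemma sum_mul_fullWord (k : ℕ) (v : Option (GaloisField 3 m) → ZMod 3) (a b : GaloisField 3 m)
    (c : ZMod 3) :
    ∑ i, v i * fullWord m k a b c i =
      tr m (a * (algebraMap (ZMod 3) _ (v none) + ∑ x, v (some x) • cmf m k x)) +
        tr m (b * ∑ x, v (some x) • x) + c * ∑ x, v (some x) := by
  simp only [Fintype.sum_option, fullWord, Option.elim, mul_add, tr_add, tr_mul_algebraMap,
    tr_mul_sum_smul, Finset.sum_add_distrib, ← Finset.sum_mul]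
  ring

lemma mem_fullDual_iff (k : ℕ) (v : Option (GaloisField 3 m) → ZMod 3) :
    v ∈ fullDual m k ↔ ∑ x, v (some x) = 0 ∧ ∑ x, v (some x) • x = 0 ∧
      algebraMap (ZMod 3) _ (v none) + ∑ x, v (some x) • cmf m k x = 0 := by
  simp only [fullDual, Set.mem_ofPred_eq, sum_mul_fullWord]
  refine ⟨fun hv => ⟨?_, ?_, ?_⟩, fun ⟨h0, h1, h2⟩ a b c => by simp [h0, h1, h2, tr]⟩
  · simpa [tr] using hv 0 0 1
  · exact eq_zero_of_forall_tr_mul_eq_zero fun b => by simpa [tr] using hv 0 b 0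
  · exact eq_zero_of_forall_tr_mul_eq_zero fun a => by simpa [tr] using hv a 0 0

theorem eq_zero_of_mem_fullDual_of_hammingNorm_le_three (hm : m ≠ 0) {k : ℕ} (hk : Odd k)
    (hmk : m.gcd k = 1) {v : Option (GaloisField 3 m) → ZMod 3} (hv : v ∈ fullDual m k)
    (hn : hammingNorm v ≤ 3) : v = 0 := by
  obtain ⟨h0, h1, h2⟩ := (mem_fullDual_iff k v).mp hv
  rw [hammingNorm_option] at hn
  have hw : (fun x => v (some x)) = 0 := by
    refine eq_zero_of_hammingNorm_le_two h0 h1 (not_lt.mp fun h3 => ?_)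
    have hnone : v none = 0 := by by_contra h; simp only [h, if_false] at hn; omega
    obtain ⟨x, y, z, hxy, hsum⟩ :=
      exists_add_add_eq_zero_of_hammingNorm_eq_three h0 (by rw [if_pos hnone] at hn; omega)
    rw [hnone, map_zero, zero_add] at h2
    have hcard : Fintype.card (GaloisField 3 m) = 3 ^ m := by
      rw [← Nat.card_eq_fintype_card, GaloisField.card 3 m hm]
    exact hxy (eq_of_add_add_eq_zero_of_pow_add_add_eq_zero hcard hk hmk (hsum id h1)
      (hsum (cmf m k) h2))
  have hnone : v none = 0 := by simpa [congrFun hw] using h2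
  funext i
  cases i with
  | none => exact hnone
  | some x => exact congrFun hw x

lemma dualA_eq_zero (hm : m ≠ 0) {k : ℕ} (hk : Odd k) (hmk : m.gcd k = 1) {i : ℕ}
    (hi : i ≠ 0) (hi3 : i ≤ 3) : dualA m k i = 0 := by
  rw [dualA, Nat.card_eq_zero]
  refine Or.inl ⟨fun ⟨v, hv, hn⟩ => hi ?_⟩
  rw [← hn, eq_zero_of_mem_fullDual_of_hammingNorm_le_three hm hk hmk hv (hn ▸ hi3),
    hammingNorm_zero]

end SubfieldCode

/-- For `k` odd with `gcd(m,k) = 1` and the Coulter–Matthews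
function `f(x) = x^{(3^k+1)/2}` on `F_{3^m}`, the dual `C_f^⊥` of the subfield code
has `A_1^⊥ = A_2^⊥ = A_3^⊥ = 0`. -/
theorem stmt_13 (m k : ℕ) (hm : 0 < m) (hk : Odd k) (hmk : Nat.gcd m k = 1) :
    dualA m k 1 = 0 ∧ dualA m k 2 = 0 ∧ dualA m k 3 = 0 :=
  ⟨dualA_eq_zero hm.ne' hk hmk one_ne_zero (by norm_num),
    dualA_eq_zero hm.ne' hk hmk two_ne_zero (by norm_num),
    dualA_eq_zero hm.ne' hk hmk three_ne_zero le_rfl⟩
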